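/- Under the hypotheses of the main theorem (p > 1, conjugate q, 0 ≤ α ≤ ρ, 0 < γ < σ ≤ 1), the following two inequalities are equivalent: (I) Σ_n ∫₀^∞ K(x,n) a_n f(x) dx < k(σ) ‖f‖_{p,Φ_δ} ‖a‖_{q,Ψ̃} for all admissible f, a; and (II) ( Σ_n (ν_n/Ṽ_n^{1−pσ}) [∫₀^∞ K(x,n) f(x) dx]^p )^{1/p} < k(σ) ‖f‖_{p,Φ_δ} for all admissible f, where K(x,n) = csch(ρ (U^δ(x) Ṽ_n)^γ)/e^{α (U^δ(x) Ṽ_n)^γ}. -/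

import Mathlib

/-!
Write `w n = ν n / Ṽ n ^ (1 - p σ)` and `c n = ∫ K(x, n) f(x) dx`; then `Ψ̃ n = w n ^ (1 - q)`.
(I) ⇒ (II): testing (I) with the extremal sequence `a n = w n * c n ^ (p - 1)` turns both
sides into powers of `∑ w n * c n ^ p`. (II) ⇒ (I) is Hölder's inequality
`∑ a n c n ≤ (∑ w c ^ p) ^ (1/p) (∑ w ^ (1 - q) a ^ q) ^ (1/q)`, once `∑ w c ^ p` is known to
converge; a divergent `tsum` is `0`, so (II) alone does not say this. Convergence comes from
applying (II) to the truncations of `f` to `[1/m, m]` at height `m`: for them `c n` is at most a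
constant times the kernel profile at `const * Ṽ n`, which decays faster than any power, so their
series converge, (II) bounds them by `(k ‖f‖) ^ p` uniformly in `m`, and the bound passes to `f`
in the limit.
-/

/-- U(x) = ∫₀ˣ μ(t) dt. -/
noncomputable def Ufun18 (μ : ℝ → ℝ) (x : ℝ) : ℝ := ∫ t in Set.Ioc (0:ℝ) x, μ t

/-- The kernel K(x,n) = csch(ρ(U^δ(x)Ṽ_n)^γ)/e^{α(U^δ(x)Ṽ_n)^γ}. -/
noncomputable def Ker18 (μ : ℝ → ℝ) (Vt : ℕ → ℝ) (ρ α γ δ : ℝ) (x : ℝ) (n : ℕ) : ℝ :=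
  (2 / (Real.exp (ρ * ((Ufun18 μ x) ^ δ * Vt n) ^ γ)
      - Real.exp (-(ρ * ((Ufun18 μ x) ^ δ * Vt n) ^ γ))))
    / Real.exp (α * ((Ufun18 μ x) ^ δ * Vt n) ^ γ)

/-- Φ_δ(x) = U(x)^{p(1−δσ)−1}/μ(x)^{p−1}. -/
noncomputable def Phi18 (μ : ℝ → ℝ) (p σ δ : ℝ) (x : ℝ) : ℝ :=
  (Ufun18 μ x) ^ (p * (1 - δ * σ) - 1) / μ x ^ (p - 1)

/-- Ψ̃(n) = Ṽ_n^{q(1−σ)−1}/ν_n^{q−1}. -/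
noncomputable def Psi18 (ν Vt : ℕ → ℝ) (q σ : ℝ) (n : ℕ) : ℝ :=
  Vt n ^ (q * (1 - σ) - 1) / ν n ^ (q - 1)

open MeasureTheory Filter Set Topology

lemma rpow_one_sub_mul_extremal_rpow {p q : ℝ} (hpq : p.HolderConjugate q) {w c : ℝ}
    (hw : 0 < w) (hc : 0 ≤ c) : w ^ (1 - q) * (w * c ^ (p - 1)) ^ q = w * c ^ p := by
  rw [Real.mul_rpow hw.le (Real.rpow_nonneg hc _), ← Real.rpow_mul hc, hpq.sub_one_mul_conj,
    ← mul_assoc, ← Real.rpow_add hw, sub_add_cancel, Real.rpow_one]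

lemma extremal_mul_self {p : ℝ} (hp : p ≠ 0) (w : ℝ) {c : ℝ} (hc : 0 ≤ c) :
    w * c ^ (p - 1) * c = w * c ^ p := by
  rcases hc.eq_or_lt with rfl | hc
  · simp [Real.zero_rpow hp]
  · rw [mul_assoc, ← Real.rpow_add_one hc.ne', sub_add_cancel]

section WeightedDuality

variable {ι : Type*} {p q : ℝ} {w c a : ι → ℝ}

theorem tsum_mul_le_weighted_Lp_mul_Lq (hpq : p.HolderConjugate q) (hw : ∀ i, 0 < w i)
    (hc : ∀ i, 0 ≤ c i) (ha : ∀ i, 0 ≤ a i) (hwc : Summable fun i => w i * c i ^ p)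
    (hwa : Summable fun i => w i ^ (1 - q) * a i ^ q) :
    ∑' i, a i * c i ≤
      (∑' i, w i * c i ^ p) ^ (1 / p) * (∑' i, w i ^ (1 - q) * a i ^ q) ^ (1 / q) := by
  have hF : ∀ i, (w i ^ (1 / p) * c i) ^ p = w i * c i ^ p := fun i => by
    rw [Real.mul_rpow (Real.rpow_nonneg (hw i).le _) (hc i), ← Real.rpow_mul (hw i).le,
      one_div_mul_cancel hpq.ne_zero, Real.rpow_one]
  have hG : ∀ i, (w i ^ (-(1 / p)) * a i) ^ q = w i ^ (1 - q) * a i ^ q := fun i => by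
    rw [Real.mul_rpow (Real.rpow_nonneg (hw i).le _) (ha i), ← Real.rpow_mul (hw i).le]
    congr 2
    have := hpq.inv_add_inv_eq_one
    field_simp [hpq.ne_zero, hpq.symm.ne_zero] at this ⊢
    linarith
  have hFG : ∀ i, w i ^ (1 / p) * c i * (w i ^ (-(1 / p)) * a i) = a i * c i := fun i => by
    rw [Real.rpow_neg (hw i).le, mul_mul_mul_comm,
      mul_inv_cancel₀ (Real.rpow_pos_of_pos (hw i) _).ne', one_mul, mul_comm]
  simpa only [hF, hG, hFG] using Real.inner_le_Lp_mul_Lq_tsum_of_nonneg hpq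
    (f := fun i => w i ^ (1 / p) * c i) (g := fun i => w i ^ (-(1 / p)) * a i)
    (fun i => mul_nonneg (Real.rpow_nonneg (hw i).le _) (hc i))
    (fun i => mul_nonneg (Real.rpow_nonneg (hw i).le _) (ha i))
    (by simpa only [hF] using hwc) (by simpa only [hG] using hwa)

theorem weighted_rpow_tsum_lt_of_forall_tsum_mul_lt [Nonempty ι] (hpq : p.HolderConjugate q)
    (hw : ∀ i, 0 < w i) (hc : ∀ i, 0 ≤ c i) {B : ℝ}
    (h : ∀ a : ι → ℝ, (∀ i, 0 ≤ a i) → Summable (fun i => w i ^ (1 - q) * a i ^ q) →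
      0 < ∑' i, w i ^ (1 - q) * a i ^ q →
      ∑' i, a i * c i < B * (∑' i, w i ^ (1 - q) * a i ^ q) ^ (1 / q)) :
    (∑' i, w i * c i ^ p) ^ (1 / p) < B := by
  classical
  -- testing with a unit sequence gives `B > 0`, which settles the case `∑' i, w i * c i ^ p = 0`
  -- (in particular a divergent series)
  have hB : 0 < B := by
    obtain ⟨i₀⟩ := ‹Nonempty ι›
    set e : ι → ℝ := fun i => if i = i₀ then 1 else 0
    have he : ∀ i, 0 ≤ e i := fun i => by simp only [e]; split_ifs <;> norm_num
    have hsingle : HasSum (fun i => w i ^ (1 - q) * e i ^ q) (w i₀ ^ (1 - q)) := by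
      convert hasSum_single i₀ fun i hi => ?_ using 1
      · simp [e]
      · simp [e, hi, Real.zero_rpow hpq.symm.ne_zero]
    have hpos := Real.rpow_pos_of_pos (hw i₀) (1 - q)
    have := h e he hsingle.summable (hsingle.tsum_eq ▸ hpos)
    rw [hsingle.tsum_eq] at this
    have hlhs : 0 ≤ ∑' i, e i * c i := tsum_nonneg fun i => mul_nonneg (he i) (hc i)
    exact pos_of_mul_pos_left (hlhs.trans_lt this) (Real.rpow_nonneg hpos.le _)
  set J := ∑' i, w i * c i ^ p with hJ
  have hJ0 : 0 ≤ J := tsum_nonneg fun i => mul_nonneg (hw i).le (Real.rpow_nonneg (hc i) _)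
  rcases hJ0.eq_or_lt with hJ0 | hJpos
  · rwa [← hJ0, Real.zero_rpow (one_div_pos.2 hpq.pos).ne']
  have hsum : Summable fun i => w i * c i ^ p := by
    by_contra hns
    exact hJpos.ne' (tsum_eq_zero_of_not_summable hns)
  have hdual : ∀ i, w i ^ (1 - q) * (w i * c i ^ (p - 1)) ^ q = w i * c i ^ p :=
    fun i => rpow_one_sub_mul_extremal_rpow hpq (hw i) (hc i)
  have key := h (fun i => w i * c i ^ (p - 1))
    (fun i => mul_nonneg (hw i).le (Real.rpow_nonneg (hc i) _))
    (by simpa only [hdual] using hsum) (by simpa only [hdual] using hJpos)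
  simp only [hdual, extremal_mul_self hpq.ne_zero _ (hc _)] at key
  have hsplit : J = J ^ (1 / p) * J ^ (1 / q) := by
    rw [← Real.rpow_add hJpos, one_div, one_div, hpq.inv_add_inv_eq_one, Real.rpow_one]
  rw [← hJ] at key
  nth_rw 1 [hsplit] at key
  exact lt_of_mul_lt_mul_right key (Real.rpow_nonneg hJ0 _)

theorem tsum_mul_lt_of_weighted_rpow_tsum_lt (hpq : p.HolderConjugate q) (hw : ∀ i, 0 < w i)
    (hc : ∀ i, 0 ≤ c i) (hwc : Summable fun i => w i * c i ^ p) {B : ℝ}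
    (hB : (∑' i, w i * c i ^ p) ^ (1 / p) < B) (ha : ∀ i, 0 ≤ a i)
    (hwa : Summable fun i => w i ^ (1 - q) * a i ^ q) (hA : 0 < ∑' i, w i ^ (1 - q) * a i ^ q) :
    ∑' i, a i * c i < B * (∑' i, w i ^ (1 - q) * a i ^ q) ^ (1 / q) :=
  (tsum_mul_le_weighted_Lp_mul_Lq hpq hw hc ha hwc hwa).trans_lt
    (mul_lt_mul_of_pos_right hB (Real.rpow_pos_of_pos hA _))

theorem summable_of_tendsto_of_tsum_le {u : ℕ → ι → ℝ} {v : ι → ℝ} {C : ℝ}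
    (hu : ∀ m i, 0 ≤ u m i) (hv : ∀ i, 0 ≤ v i)
    (hlim : ∀ i, v i ≠ 0 → Tendsto (fun m => u m i) atTop (𝓝 (v i)))
    (hbound : ∀ᶠ m in atTop, Summable (u m) ∧ ∑' i, u m i ≤ C) : Summable v := by
  classical
  refine summable_of_sum_le (c := C) hv fun s => ?_
  rw [← Finset.sum_filter_ne_zero]
  refine le_of_tendsto (tendsto_finsetSum _ fun i hi => hlim i (Finset.mem_filter.1 hi).2) ?_
  filter_upwards [hbound] with m ⟨hsum, hle⟩
  exact (hsum.sum_le_tsum _ fun i _ => hu m i).trans hle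

end WeightedDuality

noncomputable def kernelProfile (ρ α γ t : ℝ) : ℝ :=
  (Real.sinh (ρ * t ^ γ) * Real.exp (α * t ^ γ))⁻¹

lemma Ker18_eq_kernelProfile (μ : ℝ → ℝ) (Vt : ℕ → ℝ) (ρ α γ δ x : ℝ) (n : ℕ) :
    Ker18 μ Vt ρ α γ δ x n = kernelProfile ρ α γ (Ufun18 μ x ^ δ * Vt n) := by
  rw [Ker18, kernelProfile, Real.sinh_eq, mul_inv, inv_div, div_eq_mul_inv (2 / _)]

section KernelProfile

variable {ρ α γ : ℝ}

lemma kernelProfile_pos (hρ : 0 < ρ) {t : ℝ} (ht : 0 < t) : 0 < kernelProfile ρ α γ t :=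
  inv_pos.2 (mul_pos (Real.sinh_pos_iff.2 (mul_pos hρ (Real.rpow_pos_of_pos ht γ)))
    (Real.exp_pos _))

lemma kernelProfile_antitoneOn (hρ : 0 < ρ) (hα : 0 ≤ α) (hγ : 0 < γ) :
    AntitoneOn (kernelProfile ρ α γ) (Ioi 0) := by
  intro s hs t ht hst
  have hpow : s ^ γ ≤ t ^ γ := Real.rpow_le_rpow (le_of_lt hs) hst hγ.le
  refine inv_anti₀ (mul_pos (Real.sinh_pos_iff.2 (mul_pos hρ (Real.rpow_pos_of_pos hs γ)))
    (Real.exp_pos _)) (mul_le_mul ?_ ?_ (Real.exp_pos _).le ?_)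
  · exact Real.sinh_le_sinh.2 (mul_le_mul_of_nonneg_left hpow hρ.le)
  · exact Real.exp_le_exp.2 (mul_le_mul_of_nonneg_left hpow hα)
  · exact (Real.sinh_pos_iff.2 (mul_pos hρ (Real.rpow_pos_of_pos ht γ))).le

/-- Uses `sinh x ≥ x ^ (2N+1) / (2N+1)!` with `(2N+1) γ ≥ r`. -/
lemma kernelProfile_le_rpow_neg (hρ : 0 < ρ) (hα : 0 ≤ α) (hγ : 0 < γ) (r : ℝ) {t₀ : ℝ}
    (ht₀ : 0 < t₀) : ∃ C, ∀ t, t₀ ≤ t → kernelProfile ρ α γ t ≤ C * t ^ (-r) := by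
  obtain ⟨N, hN⟩ := exists_nat_ge (r / γ)
  set k := 2 * N + 1
  have hrk : r ≤ k * γ := by
    rw [div_le_iff₀ hγ] at hN
    have : (N : ℝ) ≤ k := by simp only [k]; push_cast; linarith
    nlinarith
  refine ⟨k.factorial / ρ ^ k * t₀ ^ (r - k * γ), fun t ht => ?_⟩
  have ht0 : 0 < t := ht₀.trans_le ht
  have hx : 0 < ρ * t ^ γ := mul_pos hρ (Real.rpow_pos_of_pos ht0 γ)
  have hsinh : (ρ * t ^ γ) ^ k / k.factorial ≤ Real.sinh (ρ * t ^ γ) :=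
    le_hasSum (Real.hasSum_sinh _) N fun j _ => by positivity
  have hexp : 1 ≤ Real.exp (α * t ^ γ) :=
    Real.one_le_exp (mul_nonneg hα (Real.rpow_nonneg ht0.le γ))
  have htpow : t ^ (r - k * γ) ≤ t₀ ^ (r - k * γ) :=
    Real.rpow_le_rpow_of_nonpos ht₀ ht (by linarith)
  calc kernelProfile ρ α γ t ≤ (Real.sinh (ρ * t ^ γ))⁻¹ :=
        inv_anti₀ (Real.sinh_pos_iff.2 hx) (le_mul_of_one_le_right (Real.sinh_pos_iff.2 hx).le hexp)
    _ ≤ ((ρ * t ^ γ) ^ k / k.factorial)⁻¹ := inv_anti₀ (by positivity) hsinh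
    _ = k.factorial / ρ ^ k * t ^ (r - k * γ) * t ^ (-r) := by
        rw [mul_assoc, ← Real.rpow_add ht0, show r - k * γ + -r = -(γ * k) by ring,
          Real.rpow_neg ht0.le, Real.rpow_mul ht0.le, Real.rpow_natCast, mul_pow, inv_div]
        field_simp
    _ ≤ k.factorial / ρ ^ k * t₀ ^ (r - k * γ) * t ^ (-r) := by gcongr

end KernelProfile

section Series

variable {ν V : ℕ → ℝ}

lemma monotone_of_add_half_le (hν : ∀ n, 0 ≤ ν n) (hstep : ∀ n, V n + ν (n + 1) / 2 ≤ V (n + 1)) :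
    Monotone V :=
  monotone_nat_of_le_succ fun n => by linarith [hstep n, hν (n + 1)]

/-- The terms are dominated by the telescoping differences `2 / V n - 2 / V (n + 1)`. -/
lemma summable_div_sq_of_add_half_le (hV : 0 < V 0) (hν : ∀ n, 0 ≤ ν n)
    (hstep : ∀ n, V n + ν (n + 1) / 2 ≤ V (n + 1)) : Summable fun n => ν n / V n ^ 2 := by
  have hmono := monotone_of_add_half_le hν hstep
  have hpos : ∀ n, 0 < V n := fun n => hV.trans_le (hmono (Nat.zero_le n))
  have hpartial : ∀ n, ∑ i ∈ Finset.range (n + 1), ν i / V i ^ 2 ≤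
      ν 0 / V 0 ^ 2 + 2 / V 0 - 2 / V n := by
    intro n
    induction n with
    | zero => simp
    | succ n ih =>
      have h₀ := hpos n
      have h₁ := hpos (n + 1)
      have hle : ν (n + 1) / V (n + 1) ^ 2 ≤ 2 / V n - 2 / V (n + 1) := by
        rw [div_sub_div _ _ h₀.ne' h₁.ne', div_le_div_iff₀ (by positivity) (by positivity)]
        have hVV : V n * V (n + 1) ≤ V (n + 1) ^ 2 := by
          nlinarith [hmono (Nat.le_succ n)]
        nlinarith [mul_le_mul_of_nonneg_left hVV (hν (n + 1)),
          mul_le_mul_of_nonneg_right (show ν (n + 1) ≤ 2 * V (n + 1) - V n * 2 by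
            linarith [hstep n]) (sq_nonneg (V (n + 1)))]
      rw [Finset.sum_range_succ]
      linarith
  refine summable_of_sum_range_le (c := ν 0 / V 0 ^ 2 + 2 / V 0)
    (fun n => div_nonneg (hν n) (sq_nonneg _)) fun n => ?_
  cases n with
  | zero => simpa using add_nonneg (div_nonneg (hν 0) (sq_nonneg _)) (div_pos two_pos hV).le
  | succ n => linarith [hpartial n, div_pos two_pos (hpos n)]

lemma summable_div_rpow_mul_kernelProfile_rpow (hV : 0 < V 0) (hν : ∀ n, 0 ≤ ν n)
    (hstep : ∀ n, V n + ν (n + 1) / 2 ≤ V (n + 1)) {ρ α γ p : ℝ} (hρ : 0 < ρ) (hα : 0 ≤ α)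
    (hγ : 0 < γ) (hp : 0 < p) (σ : ℝ) {c : ℝ} (hc : 0 < c) :
    Summable fun n => ν n / V n ^ (1 - p * σ) * kernelProfile ρ α γ (c * V n) ^ p := by
  have hmono := monotone_of_add_half_le hν hstep
  have hpos : ∀ n, 0 < V n := fun n => hV.trans_le (hmono (Nat.zero_le n))
  -- with this `r`, the bound `(c * V n) ^ (-(r * p))` turns the weight into `V n ^ (-2)`
  set r := σ + 1 / p
  obtain ⟨C, hC⟩ := kernelProfile_le_rpow_neg hρ hα hγ r (mul_pos hc hV)
  have hCpos : 0 < C := by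
    have h := (kernelProfile_pos (α := α) (γ := γ) hρ (mul_pos hc hV)).trans_le (hC _ le_rfl)
    exact pos_of_mul_pos_left h (Real.rpow_nonneg (mul_pos hc hV).le _)
  refine Summable.of_nonneg_of_le (fun n => ?_) (fun n => ?_)
    ((summable_div_sq_of_add_half_le hV hν hstep).mul_left (C ^ p * c ^ (-(r * p))))
  · exact mul_nonneg (div_nonneg (hν n) (Real.rpow_nonneg (hpos n).le _))
      (Real.rpow_nonneg (kernelProfile_pos hρ (mul_pos hc (hpos n))).le _)
  have hcV := mul_pos hc (hpos n)
  have hbound : kernelProfile ρ α γ (c * V n) ^ p ≤ C ^ p * c ^ (-(r * p)) * V n ^ (-(r * p)) := by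
    calc kernelProfile ρ α γ (c * V n) ^ p ≤ (C * (c * V n) ^ (-r)) ^ p :=
          Real.rpow_le_rpow (kernelProfile_pos hρ hcV).le
            (hC _ (mul_le_mul_of_nonneg_left (hmono (Nat.zero_le n)) hc.le)) hp.le
      _ = C ^ p * c ^ (-(r * p)) * V n ^ (-(r * p)) := by
        rw [Real.mul_rpow hCpos.le (Real.rpow_nonneg hcV.le _), ← Real.rpow_mul hcV.le,
          neg_mul, Real.mul_rpow hc.le (hpos n).le, mul_assoc]
  have hexp : V n ^ (-(r * p)) / V n ^ (1 - p * σ) = (V n ^ 2)⁻¹ := by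
    rw [← Real.rpow_sub (hpos n), show -(r * p) - (1 - p * σ) = -2 by
      simp only [r]; field_simp; ring, Real.rpow_neg (hpos n).le, Real.rpow_two]
  calc ν n / V n ^ (1 - p * σ) * kernelProfile ρ α γ (c * V n) ^ p
      ≤ ν n / V n ^ (1 - p * σ) * (C ^ p * c ^ (-(r * p)) * V n ^ (-(r * p))) :=
        mul_le_mul_of_nonneg_left hbound (div_nonneg (hν n) (Real.rpow_nonneg (hpos n).le _))
    _ = C ^ p * c ^ (-(r * p)) * (ν n / V n ^ 2) := by
        rw [div_eq_mul_inv (ν n) (V n ^ 2), ← hexp]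
        ring

end Series

section Weights

variable {μ : ℝ → ℝ}

lemma Ufun18_pos (hμpos : ∀ x, 0 < x → 0 < μ x)
    (hμint : ∀ x, 0 < x → IntegrableOn μ (Ioc 0 x)) {x : ℝ} (hx : 0 < x) : 0 < Ufun18 μ x := by
  rw [Ufun18, ← intervalIntegral.integral_of_le hx.le]
  exact intervalIntegral.intervalIntegral_pos_of_pos_on
    ((intervalIntegrable_iff_integrableOn_Ioc_of_le hx.le).2 (hμint x hx))
    (fun t ht => hμpos t ht.1) hx

lemma Ufun18_mono (hμpos : ∀ x, 0 < x → 0 < μ x)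
    (hμint : ∀ x, 0 < x → IntegrableOn μ (Ioc 0 x)) : Monotone (Ufun18 μ) := by
  intro x y hxy
  rcases le_or_gt y 0 with hy | hy
  · rw [Ufun18, Ufun18, Ioc_eq_empty (by linarith), Ioc_eq_empty (by linarith)]
  · refine setIntegral_mono_set (hμint y hy) ?_ (Ioc_subset_Ioc_right hxy).eventuallyLE
    filter_upwards [ae_restrict_mem measurableSet_Ioc] with t ht using (hμpos t ht.1).le

lemma Phi18_pos (hμpos : ∀ x, 0 < x → 0 < μ x) (hμint : ∀ x, 0 < x → IntegrableOn μ (Ioc 0 x))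
    (p σ δ : ℝ) {x : ℝ} (hx : 0 < x) : 0 < Phi18 μ p σ δ x :=
  div_pos (Real.rpow_pos_of_pos (Ufun18_pos hμpos hμint hx) _)
    (Real.rpow_pos_of_pos (hμpos x hx) _)

lemma aemeasurable_Phi18 (hμc : ContinuousOn μ (Ioi 0)) (hμpos : ∀ x, 0 < x → 0 < μ x)
    (hμint : ∀ x, 0 < x → IntegrableOn μ (Ioc 0 x)) (p σ δ : ℝ) :
    AEMeasurable (Phi18 μ p σ δ) (volume.restrict (Ioi 0)) := by
  have hU := (Ufun18_mono hμpos hμint).measurable.aemeasurable (μ := volume.restrict (Ioi 0))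
  have hμm := hμc.aemeasurable (μ := volume) measurableSet_Ioi
  unfold Phi18
  fun_prop

/-- `f = (Φ⁻¹ * (Φ * f ^ p)) ^ (1 / p)` on `(0, ∞)`, where `Φ > 0`. -/
lemma aemeasurable_of_integrableOn_Phi18_mul_rpow (hμc : ContinuousOn μ (Ioi 0))
    (hμpos : ∀ x, 0 < x → 0 < μ x) (hμint : ∀ x, 0 < x → IntegrableOn μ (Ioc 0 x))
    {p σ δ : ℝ} (hp : p ≠ 0) {f : ℝ → ℝ} (hf : ∀ x, 0 ≤ f x)
    (hfi : IntegrableOn (fun x => Phi18 μ p σ δ x * f x ^ p) (Ioi 0)) :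
    AEMeasurable f (volume.restrict (Ioi 0)) := by
  have hPhi := aemeasurable_Phi18 hμc hμpos hμint p σ δ
  refine ((hPhi.inv.mul hfi.aemeasurable).pow_const p⁻¹).congr ?_
  filter_upwards [ae_restrict_mem measurableSet_Ioi] with x hx
  simp only [Pi.mul_apply, Pi.inv_apply]
  rw [← mul_assoc, inv_mul_cancel₀ (Phi18_pos hμpos hμint p σ δ hx).ne', one_mul,
    Real.rpow_rpow_inv (hf x) hp]

end Weights

section PartialSums

variable {ν Vt : ℕ → ℝ}

lemma pos_of_sum_Icc_sub_half_le (hν : ∀ n, 1 ≤ n → 0 < ν n)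
    (hVt : ∀ n, 1 ≤ n → (∑ j ∈ Finset.Icc 1 n, ν j) - ν n / 2 ≤ Vt n)
    {n : ℕ} (hn : 1 ≤ n) : 0 < Vt n := by
  have hs : ν n ≤ ∑ j ∈ Finset.Icc 1 n, ν j :=
    Finset.single_le_sum (fun i hi => (hν i (Finset.mem_Icc.1 hi).1).le)
      (Finset.mem_Icc.2 ⟨hn, le_rfl⟩)
  linarith [hVt n hn, hν n hn]

lemma add_half_le_of_sum_Icc_bounds
    (hVt : ∀ n, 1 ≤ n →
      (∑ j ∈ Finset.Icc 1 n, ν j) - ν n / 2 ≤ Vt n ∧ Vt n ≤ ∑ j ∈ Finset.Icc 1 n, ν j)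
    {n : ℕ} (hn : 1 ≤ n) : Vt n + ν (n + 1) / 2 ≤ Vt (n + 1) := by
  have hsum := Finset.sum_Icc_succ_top (show 1 ≤ n + 1 by omega) ν
  linarith [(hVt (n + 1) (by omega)).1, (hVt n hn).2]

end PartialSums

section Truncation

noncomputable def truncation (f : ℝ → ℝ) (m : ℕ) : ℝ → ℝ :=
  (Icc (m : ℝ)⁻¹ m).indicator fun x => min (f x) m

variable {f : ℝ → ℝ} (m : ℕ)

lemma truncation_nonneg (hf : ∀ x, 0 ≤ f x) (x : ℝ) : 0 ≤ truncation f m x :=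
  indicator_nonneg (fun x _ => le_min (hf x) m.cast_nonneg) x

lemma truncation_le (hf : ∀ x, 0 ≤ f x) (x : ℝ) : truncation f m x ≤ f x :=
  indicator_le' (fun _ _ => min_le_left _ _) (fun y _ => hf y) x

lemma truncation_le_indicator (x : ℝ) :
    truncation f m x ≤ (Icc (m : ℝ)⁻¹ m).indicator (fun _ => (m : ℝ)) x :=
  indicator_le_indicator (min_le_right _ _)

lemma eventually_truncation_eq {x : ℝ} (hx : 0 < x) :
    ∀ᶠ m : ℕ in atTop, truncation f m x = f x := by
  obtain ⟨M, hM⟩ := exists_nat_ge (max (max x x⁻¹) (f x))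
  filter_upwards [eventually_ge_atTop M] with m hm
  have hmM : max (max x x⁻¹) (f x) ≤ m := hM.trans (Nat.cast_le.2 hm)
  simp only [max_le_iff] at hmM
  have hmem : x ∈ Icc (m : ℝ)⁻¹ m :=
    ⟨inv_le_of_inv_le₀ hx hmM.1.2, hmM.1.1⟩
  rw [truncation, indicator_of_mem hmem, min_eq_left hmM.2]

lemma AEMeasurable.truncation {μ : Measure ℝ} (hf : AEMeasurable f μ) :
    AEMeasurable (_root_.truncation f m) μ :=
  (hf.min aemeasurable_const).indicator measurableSet_Icc

lemma norm_mul_truncation_rpow_le (hf : ∀ x, 0 ≤ f x) {r : ℝ} (hr : 0 ≤ r) {c : ℝ} (hc : 0 ≤ c)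
    (x : ℝ) : ‖c * truncation f m x ^ r‖ ≤ c * f x ^ r := by
  have ht := truncation_nonneg m hf x
  rw [Real.norm_of_nonneg (mul_nonneg hc (Real.rpow_nonneg ht r))]
  exact mul_le_mul_of_nonneg_left (Real.rpow_le_rpow ht (truncation_le m hf x) hr) hc

variable {h : ℝ → ℝ}

lemma integrableOn_mul_truncation_rpow (hh : AEMeasurable h (volume.restrict (Ioi 0)))
    (hh0 : ∀ x ∈ Ioi (0 : ℝ), 0 ≤ h x) (hf : ∀ x, 0 ≤ f x)
    (hfm : AEMeasurable f (volume.restrict (Ioi 0))) {r : ℝ} (hr : 0 ≤ r)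
    (hint : IntegrableOn (fun x => h x * f x ^ r) (Ioi 0)) :
    IntegrableOn (fun x => h x * truncation f m x ^ r) (Ioi 0) := by
  refine hint.mono' (hh.mul ((hfm.truncation m).pow_const r)).aestronglyMeasurable ?_
  filter_upwards [ae_restrict_mem measurableSet_Ioi] with x hx
    using norm_mul_truncation_rpow_le m hf hr (hh0 x hx) x

lemma tendsto_setIntegral_mul_truncation_rpow (hh : AEMeasurable h (volume.restrict (Ioi 0)))
    (hh0 : ∀ x ∈ Ioi (0 : ℝ), 0 ≤ h x) (hf : ∀ x, 0 ≤ f x)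
    (hfm : AEMeasurable f (volume.restrict (Ioi 0))) {r : ℝ} (hr : 0 ≤ r)
    (hint : IntegrableOn (fun x => h x * f x ^ r) (Ioi 0)) :
    Tendsto (fun m : ℕ => ∫ x in Ioi 0, h x * truncation f m x ^ r) atTop
      (𝓝 (∫ x in Ioi 0, h x * f x ^ r)) := by
  refine tendsto_integral_of_dominated_convergence _
    (fun m => (hh.mul ((hfm.truncation m).pow_const r)).aestronglyMeasurable) hint
    (fun m => ?_) ?_
  · filter_upwards [ae_restrict_mem measurableSet_Ioi] with x hx
      using norm_mul_truncation_rpow_le m hf hr (hh0 x hx) x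
  · filter_upwards [ae_restrict_mem measurableSet_Ioi] with x hx
    refine tendsto_const_nhds.congr' ?_
    filter_upwards [eventually_truncation_eq hx] with m hm
    rw [hm]

lemma setIntegral_mul_truncation_rpow_le (hh : AEMeasurable h (volume.restrict (Ioi 0)))
    (hh0 : ∀ x ∈ Ioi (0 : ℝ), 0 ≤ h x) (hf : ∀ x, 0 ≤ f x)
    (hfm : AEMeasurable f (volume.restrict (Ioi 0))) {r : ℝ} (hr : 0 ≤ r)
    (hint : IntegrableOn (fun x => h x * f x ^ r) (Ioi 0)) :
    ∫ x in Ioi 0, h x * truncation f m x ^ r ≤ ∫ x in Ioi 0, h x * f x ^ r :=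
  setIntegral_mono_on (integrableOn_mul_truncation_rpow m hh hh0 hf hfm hr hint) hint
    measurableSet_Ioi fun x hx =>
      (Real.le_norm_self _).trans (norm_mul_truncation_rpow_le m hf hr (hh0 x hx) x)

end Truncation

section KernelIntegral

variable {μ : ℝ → ℝ} {ν Vt : ℕ → ℝ} {ρ α γ δ : ℝ}

lemma Ker18_pos (hμpos : ∀ x, 0 < x → 0 < μ x) (hμint : ∀ x, 0 < x → IntegrableOn μ (Ioc 0 x))
    (hρ : 0 < ρ) {x : ℝ} (hx : 0 < x) {n : ℕ} (hV : 0 < Vt n) : 0 < Ker18 μ Vt ρ α γ δ x n := by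
  rw [Ker18_eq_kernelProfile]
  exact kernelProfile_pos hρ (mul_pos (Real.rpow_pos_of_pos (Ufun18_pos hμpos hμint hx) _) hV)

lemma measurable_Ker18 (hμpos : ∀ x, 0 < x → 0 < μ x)
    (hμint : ∀ x, 0 < x → IntegrableOn μ (Ioc 0 x)) (n : ℕ) :
    Measurable fun x => Ker18 μ Vt ρ α γ δ x n := by
  have := (Ufun18_mono hμpos hμint).measurable
  unfold Ker18
  fun_prop

lemma setIntegral_Ker18_mul_nonneg (hμpos : ∀ x, 0 < x → 0 < μ x)
    (hμint : ∀ x, 0 < x → IntegrableOn μ (Ioc 0 x)) (hρ : 0 < ρ) {n : ℕ} (hV : 0 < Vt n)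
    {g : ℝ → ℝ} (hg : ∀ x, 0 ≤ g x) : 0 ≤ ∫ x in Ioi 0, Ker18 μ Vt ρ α γ δ x n * g x :=
  setIntegral_nonneg measurableSet_Ioi fun x hx =>
    mul_nonneg (Ker18_pos hμpos hμint hρ hx hV).le (hg x)

lemma tendsto_setIntegral_Ker18_mul_truncation (hμpos : ∀ x, 0 < x → 0 < μ x)
    (hμint : ∀ x, 0 < x → IntegrableOn μ (Ioc 0 x)) (hρ : 0 < ρ) {n : ℕ} (hV : 0 < Vt n)
    {f : ℝ → ℝ} (hf : ∀ x, 0 ≤ f x) (hfm : AEMeasurable f (volume.restrict (Ioi 0)))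
    (hint : IntegrableOn (fun x => Ker18 μ Vt ρ α γ δ x n * f x) (Ioi 0)) :
    Tendsto (fun m : ℕ => ∫ x in Ioi 0, Ker18 μ Vt ρ α γ δ x n * truncation f m x) atTop
      (𝓝 (∫ x in Ioi 0, Ker18 μ Vt ρ α γ δ x n * f x)) := by
  simpa only [Real.rpow_one] using tendsto_setIntegral_mul_truncation_rpow
    (measurable_Ker18 hμpos hμint n).aemeasurable
    (fun x hx => (Ker18_pos hμpos hμint hρ hx hV).le) hf hfm zero_le_one
    (by simpa only [Real.rpow_one] using hint)

/-- `U ^ δ` is monotone or antitone, so its minimum on `[a, b]` is attained at an endpoint. -/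
lemma exists_pos_le_Ufun18_rpow_of_mem_Icc (hμpos : ∀ x, 0 < x → 0 < μ x)
    (hμint : ∀ x, 0 < x → IntegrableOn μ (Ioc 0 x)) (hδ : δ = 1 ∨ δ = -1) {a b : ℝ} (ha : 0 < a)
    (hab : a ≤ b) : ∃ c > 0, ∀ x ∈ Icc a b, c ≤ Ufun18 μ x ^ δ := by
  have hU := Ufun18_mono hμpos hμint
  have hUpos : ∀ x, 0 < x → 0 < Ufun18 μ x := fun x hx => Ufun18_pos hμpos hμint hx
  refine ⟨min (Ufun18 μ a ^ δ) (Ufun18 μ b ^ δ),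
    lt_min (Real.rpow_pos_of_pos (hUpos a ha) _)
      (Real.rpow_pos_of_pos (hUpos b (ha.trans_le hab)) _),
    fun x hx => ?_⟩
  rcases hδ with rfl | rfl
  · simpa only [Real.rpow_one] using min_le_of_left_le (hU hx.1)
  · simp only [Real.rpow_neg_one]
    exact min_le_of_right_le (inv_anti₀ (hUpos x (ha.trans_le hx.1)) (hU hx.2))

lemma exists_setIntegral_Ker18_mul_truncation_le (hμpos : ∀ x, 0 < x → 0 < μ x)
    (hμint : ∀ x, 0 < x → IntegrableOn μ (Ioc 0 x)) (hρ : 0 < ρ) (hα : 0 ≤ α) (hγ : 0 < γ)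
    (hδ : δ = 1 ∨ δ = -1) {f : ℝ → ℝ} (hf : ∀ x, 0 ≤ f x) {m : ℕ} (hm : 1 ≤ m) :
    ∃ c > 0, ∃ B ≥ 0, ∀ n, 0 < Vt n →
      ∫ x in Ioi 0, Ker18 μ Vt ρ α γ δ x n * truncation f m x ≤
        B * kernelProfile ρ α γ (c * Vt n) := by
  have hm' : (1 : ℝ) ≤ m := by exact_mod_cast hm
  have hminv : 0 < (m : ℝ)⁻¹ := by positivity
  obtain ⟨c, hc, hcU⟩ := exists_pos_le_Ufun18_rpow_of_mem_Icc hμpos hμint hδ hminv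
    ((inv_le_one_of_one_le₀ hm').trans hm')
  refine ⟨c, hc, volume.real (Icc (m : ℝ)⁻¹ m) * m, by positivity, fun n hV => ?_⟩
  set g := kernelProfile ρ α γ (c * Vt n)
  have hg : 0 < g := kernelProfile_pos hρ (mul_pos hc hV)
  have hK : ∀ x ∈ Icc (m : ℝ)⁻¹ m, Ker18 μ Vt ρ α γ δ x n ≤ g := fun x hx => by
    rw [Ker18_eq_kernelProfile]
    exact kernelProfile_antitoneOn hρ hα hγ (mul_pos hc hV)
      (mul_pos (Real.rpow_pos_of_pos (Ufun18_pos hμpos hμint (hminv.trans_le hx.1)) _) hV)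
      (mul_le_mul_of_nonneg_right (hcU x hx) hV.le)
  calc ∫ x in Ioi 0, Ker18 μ Vt ρ α γ δ x n * truncation f m x
      ≤ ∫ x in Ioi 0, (Icc (m : ℝ)⁻¹ m).indicator (fun _ => g * m) x := by
        refine integral_mono_of_nonneg ?_ ((integrable_indicator_iff measurableSet_Icc).2
          (integrableOn_const measure_Icc_lt_top.ne)).restrict ?_
        · filter_upwards [ae_restrict_mem measurableSet_Ioi] with x hx
          exact mul_nonneg (Ker18_pos hμpos hμint hρ hx hV).le (truncation_nonneg m hf x)
        · filter_upwards [ae_restrict_mem measurableSet_Ioi] with x hx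
          by_cases hxI : x ∈ Icc (m : ℝ)⁻¹ m
          · rw [indicator_of_mem hxI]
            refine mul_le_mul (hK x hxI) ?_ (truncation_nonneg m hf x) hg.le
            simpa [indicator_of_mem hxI] using truncation_le_indicator (f := f) m x
          · simp [truncation, indicator_of_notMem hxI]
    _ ≤ ∫ x, (Icc (m : ℝ)⁻¹ m).indicator (fun _ => g * m) x :=
        setIntegral_le_integral ((integrable_indicator_iff measurableSet_Icc).2
          (integrableOn_const measure_Icc_lt_top.ne))
          (Eventually.of_forall fun x => indicator_nonneg (fun _ _ => by positivity) x)
    _ = volume.real (Icc (m : ℝ)⁻¹ m) * m * g := by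
        rw [integral_indicator_const _ measurableSet_Icc, smul_eq_mul]
        ring

end KernelIntegral

section Summability

variable {μ : ℝ → ℝ} {ν Vt : ℕ → ℝ} {p σ ρ α γ δ : ℝ}

lemma summable_weighted_integral_Ker18_truncation_rpow (hμpos : ∀ x, 0 < x → 0 < μ x)
    (hμint : ∀ x, 0 < x → IntegrableOn μ (Ioc 0 x)) (hν : ∀ n, 1 ≤ n → 0 < ν n)
    (hVt : ∀ n, 1 ≤ n →
      (∑ j ∈ Finset.Icc 1 n, ν j) - ν n / 2 ≤ Vt n ∧ Vt n ≤ ∑ j ∈ Finset.Icc 1 n, ν j)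
    (hρ : 0 < ρ) (hα : 0 ≤ α) (hγ : 0 < γ) (hδ : δ = 1 ∨ δ = -1) (hp : 0 < p)
    {f : ℝ → ℝ} (hf : ∀ x, 0 ≤ f x) {m : ℕ} (hm : 1 ≤ m) :
    Summable fun n : ℕ => ν (n + 1) / Vt (n + 1) ^ (1 - p * σ) *
      (∫ x in Ioi 0, Ker18 μ Vt ρ α γ δ x (n + 1) * truncation f m x) ^ p := by
  have hV : ∀ n : ℕ, 0 < Vt (n + 1) := fun n =>
    pos_of_sum_Icc_sub_half_le hν (fun n hn => (hVt n hn).1) (by omega)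
  have hw : ∀ n : ℕ, 0 ≤ ν (n + 1) / Vt (n + 1) ^ (1 - p * σ) := fun n =>
    div_nonneg (hν _ (by omega)).le (Real.rpow_nonneg (hV n).le _)
  obtain ⟨c, hc, B, hB, hbound⟩ :=
    exists_setIntegral_Ker18_mul_truncation_le (Vt := Vt) hμpos hμint hρ hα hγ hδ hf hm
  have hprofile := summable_div_rpow_mul_kernelProfile_rpow (V := fun n => Vt (n + 1))
    (ν := fun n => ν (n + 1)) (hV 0) (fun n => (hν _ (by omega)).le)
    (fun n => add_half_le_of_sum_Icc_bounds hVt (by omega)) hρ hα hγ hp σ hc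
  refine Summable.of_nonneg_of_le (fun n => mul_nonneg (hw n) (Real.rpow_nonneg
    (setIntegral_Ker18_mul_nonneg hμpos hμint hρ (hV n) (truncation_nonneg m hf)) _))
    (fun n => ?_) (hprofile.mul_left (B ^ p))
  have hg := (kernelProfile_pos (α := α) (γ := γ) hρ (mul_pos hc (hV n))).le
  calc ν (n + 1) / Vt (n + 1) ^ (1 - p * σ) *
        (∫ x in Ioi 0, Ker18 μ Vt ρ α γ δ x (n + 1) * truncation f m x) ^ p
      ≤ ν (n + 1) / Vt (n + 1) ^ (1 - p * σ) *
        (B * kernelProfile ρ α γ (c * Vt (n + 1))) ^ p :=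
        mul_le_mul_of_nonneg_left (Real.rpow_le_rpow (setIntegral_Ker18_mul_nonneg hμpos hμint hρ
          (hV n) (truncation_nonneg m hf)) (hbound _ (hV n)) hp.le) (hw n)
    _ = B ^ p * (ν (n + 1) / Vt (n + 1) ^ (1 - p * σ) *
        kernelProfile ρ α γ (c * Vt (n + 1)) ^ p) := by
        rw [Real.mul_rpow hB hg]
        ring

theorem summable_weighted_integral_Ker18_rpow (hμc : ContinuousOn μ (Ioi 0))
    (hμpos : ∀ x, 0 < x → 0 < μ x) (hμint : ∀ x, 0 < x → IntegrableOn μ (Ioc 0 x))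
    (hν : ∀ n, 1 ≤ n → 0 < ν n)
    (hVt : ∀ n, 1 ≤ n →
      (∑ j ∈ Finset.Icc 1 n, ν j) - ν n / 2 ≤ Vt n ∧ Vt n ≤ ∑ j ∈ Finset.Icc 1 n, ν j)
    (hρ : 0 < ρ) (hα : 0 ≤ α) (hγ : 0 < γ) (hδ : δ = 1 ∨ δ = -1) (hp : 0 < p) {k : ℝ}
    (hII : ∀ f : ℝ → ℝ, (∀ x, 0 ≤ f x) →
      IntegrableOn (fun x => Phi18 μ p σ δ x * f x ^ p) (Ioi 0) →
      0 < ∫ x in Ioi 0, Phi18 μ p σ δ x * f x ^ p →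
      (∑' n : ℕ, ν (n + 1) / Vt (n + 1) ^ (1 - p * σ) *
          (∫ x in Ioi 0, Ker18 μ Vt ρ α γ δ x (n + 1) * f x) ^ p) ^ (1 / p) <
        k * (∫ x in Ioi 0, Phi18 μ p σ δ x * f x ^ p) ^ (1 / p))
    {f : ℝ → ℝ} (hf : ∀ x, 0 ≤ f x)
    (hfi : IntegrableOn (fun x => Phi18 μ p σ δ x * f x ^ p) (Ioi 0))
    (hI : 0 < ∫ x in Ioi 0, Phi18 μ p σ δ x * f x ^ p) :
    Summable fun n : ℕ => ν (n + 1) / Vt (n + 1) ^ (1 - p * σ) *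
      (∫ x in Ioi 0, Ker18 μ Vt ρ α γ δ x (n + 1) * f x) ^ p := by
  have hV : ∀ n : ℕ, 0 < Vt (n + 1) := fun n =>
    pos_of_sum_Icc_sub_half_le hν (fun n hn => (hVt n hn).1) (by omega)
  have hw : ∀ n : ℕ, 0 ≤ ν (n + 1) / Vt (n + 1) ^ (1 - p * σ) := fun n =>
    div_nonneg (hν _ (by omega)).le (Real.rpow_nonneg (hV n).le _)
  have hterm : ∀ g : ℝ → ℝ, (∀ x, 0 ≤ g x) → ∀ n : ℕ, 0 ≤ ν (n + 1) / Vt (n + 1) ^ (1 - p * σ) *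
      (∫ x in Ioi 0, Ker18 μ Vt ρ α γ δ x (n + 1) * g x) ^ p := fun g hg n =>
    mul_nonneg (hw n) (Real.rpow_nonneg (setIntegral_Ker18_mul_nonneg hμpos hμint hρ (hV n) hg) _)
  have hfm := aemeasurable_of_integrableOn_Phi18_mul_rpow hμc hμpos hμint hp.ne' hf hfi
  have hPhi := aemeasurable_Phi18 hμc hμpos hμint p σ δ
  have hPhi0 : ∀ x ∈ Ioi (0 : ℝ), 0 ≤ Phi18 μ p σ δ x := fun x hx =>
    (Phi18_pos hμpos hμint p σ δ hx).le
  have hB : 0 ≤ k * (∫ x in Ioi 0, Phi18 μ p σ δ x * f x ^ p) ^ (1 / p) :=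
    (Real.rpow_nonneg (tsum_nonneg (hterm f hf)) _).trans (hII f hf hfi hI).le
  have hk : 0 ≤ k := (mul_nonneg_iff_of_pos_right (Real.rpow_pos_of_pos hI _)).1 hB
  refine summable_of_tendsto_of_tsum_le
    (C := (k * (∫ x in Ioi 0, Phi18 μ p σ δ x * f x ^ p) ^ (1 / p)) ^ p)
    (fun m => hterm _ (truncation_nonneg m hf)) (hterm f hf) (fun n hn => ?_) ?_
  · have hint : IntegrableOn (fun x => Ker18 μ Vt ρ α γ δ x (n + 1) * f x) (Ioi 0) := by
      by_contra hni
      exact hn (by rw [integral_undef hni, Real.zero_rpow hp.ne', mul_zero])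
    exact ((tendsto_setIntegral_Ker18_mul_truncation hμpos hμint hρ (hV n) hf hfm hint).rpow_const
      (Or.inr hp.le)).const_mul _
  · filter_upwards [eventually_ge_atTop 1,
      (tendsto_setIntegral_mul_truncation_rpow hPhi hPhi0 hf hfm hp.le hfi).eventually
        (eventually_gt_nhds hI)] with m hm hIm
    refine ⟨summable_weighted_integral_Ker18_truncation_rpow hμpos hμint hν hVt hρ hα hγ hδ hp
      hf hm, ?_⟩
    have hle := setIntegral_mul_truncation_rpow_le m hPhi hPhi0 hf hfm hp.le hfi
    rw [← Real.rpow_inv_le_iff_of_pos (tsum_nonneg (hterm _ (truncation_nonneg m hf))) hB hp,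
      ← one_div]
    exact (hII _ (truncation_nonneg m hf)
      (integrableOn_mul_truncation_rpow m hPhi hPhi0 hf hfm hp.le hfi) hIm).le.trans
      (mul_le_mul_of_nonneg_left (Real.rpow_le_rpow hIm.le hle (by positivity)) hk)

end Summability

lemma Psi18_eq_rpow {ν Vt : ℕ → ℝ} {p q : ℝ} (hpq : p.HolderConjugate q) (σ : ℝ) {n : ℕ}
    (hν : 0 < ν n) (hV : 0 < Vt n) :
    Psi18 ν Vt q σ n = (ν n / Vt n ^ (1 - p * σ)) ^ (1 - q) := by
  have hexp : (1 - p * σ) * (1 - q) = -(q * (1 - σ) - 1) := by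
    have h := hpq.mul_eq_add
    linear_combination σ * h
  rw [Psi18, Real.div_rpow hν.le (Real.rpow_nonneg hV.le _), ← Real.rpow_mul hV.le, hexp,
    Real.rpow_neg hV.le, show 1 - q = -(q - 1) by ring, Real.rpow_neg hν.le, div_inv_eq_mul,
    inv_mul_eq_div]

theorem stmt18_general (μ : ℝ → ℝ) (ν Vt : ℕ → ℝ) (p q σ γ α ρ δ k : ℝ)
    (hp : 1 < p) (hpq : 1 / p + 1 / q = 1)
    (hμc : ContinuousOn μ (Set.Ioi 0)) (hμpos : ∀ x : ℝ, 0 < x → 0 < μ x)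
    (hμint : ∀ x : ℝ, 0 < x → MeasureTheory.IntegrableOn μ (Set.Ioc 0 x))
    (hν : ∀ n : ℕ, 1 ≤ n → 0 < ν n)
    (hVt : ∀ n : ℕ, 1 ≤ n →
      (∑ j ∈ Finset.Icc 1 n, ν j) - ν n / 2 ≤ Vt n ∧ Vt n ≤ ∑ j ∈ Finset.Icc 1 n, ν j)
    (hα : 0 ≤ α) (hρ : 0 < ρ)
    (hγ : 0 < γ) (hδ : δ = 1 ∨ δ = -1) :
    ((∀ f : ℝ → ℝ, ∀ a : ℕ → ℝ, (∀ x, 0 ≤ f x) → (∀ n, 0 ≤ a n) →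
        MeasureTheory.IntegrableOn (fun x => Phi18 μ p σ δ x * f x ^ p) (Set.Ioi (0:ℝ)) →
        0 < (∫ x in Set.Ioi (0:ℝ), Phi18 μ p σ δ x * f x ^ p) →
        Summable (fun n : ℕ => Psi18 ν Vt q σ (n + 1) * a (n + 1) ^ q) →
        0 < (∑' n : ℕ, Psi18 ν Vt q σ (n + 1) * a (n + 1) ^ q) →
        (∑' n : ℕ, ∫ x in Set.Ioi (0:ℝ), Ker18 μ Vt ρ α γ δ x (n + 1) * a (n + 1) * f x)
          < k * (∫ x in Set.Ioi (0:ℝ), Phi18 μ p σ δ x * f x ^ p) ^ (1 / p)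
              * (∑' n : ℕ, Psi18 ν Vt q σ (n + 1) * a (n + 1) ^ q) ^ (1 / q))
      ↔
      (∀ f : ℝ → ℝ, (∀ x, 0 ≤ f x) →
        MeasureTheory.IntegrableOn (fun x => Phi18 μ p σ δ x * f x ^ p) (Set.Ioi (0:ℝ)) →
        0 < (∫ x in Set.Ioi (0:ℝ), Phi18 μ p σ δ x * f x ^ p) →
        (∑' n : ℕ, ν (n + 1) / Vt (n + 1) ^ (1 - p * σ)
            * (∫ x in Set.Ioi (0:ℝ), Ker18 μ Vt ρ α γ δ x (n + 1) * f x) ^ p) ^ (1 / p)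
          < k * (∫ x in Set.Ioi (0:ℝ), Phi18 μ p σ δ x * f x ^ p) ^ (1 / p))) := by
  have hpq' : p.HolderConjugate q :=
    Real.holderConjugate_iff.2 ⟨hp, by simpa only [one_div] using hpq⟩
  have hV : ∀ n : ℕ, 0 < Vt (n + 1) := fun n =>
    pos_of_sum_Icc_sub_half_le hν (fun n hn => (hVt n hn).1) (by omega)
  have hw : ∀ n : ℕ, 0 < ν (n + 1) / Vt (n + 1) ^ (1 - p * σ) := fun n =>
    div_pos (hν _ (by omega)) (Real.rpow_pos_of_pos (hV n) _)
  have hc : ∀ g : ℝ → ℝ, (∀ x, 0 ≤ g x) → ∀ n : ℕ,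
      0 ≤ ∫ x in Ioi 0, Ker18 μ Vt ρ α γ δ x (n + 1) * g x := fun g hg n =>
    setIntegral_Ker18_mul_nonneg hμpos hμint hρ (hV n) hg
  have hfactor : ∀ (g : ℝ → ℝ) (a : ℕ → ℝ) (n : ℕ),
      ∫ x in Ioi 0, Ker18 μ Vt ρ α γ δ x (n + 1) * a (n + 1) * g x =
        a (n + 1) * ∫ x in Ioi 0, Ker18 μ Vt ρ α γ δ x (n + 1) * g x := fun g a n => by
    simp_rw [mul_right_comm _ (a (n + 1)), integral_mul_const, mul_comm]
  simp only [Psi18_eq_rpow hpq' σ (hν _ (Nat.le_add_left 1 _)) (hV _), hfactor]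
  constructor
  · intro hI f hf hfi hIf
    refine weighted_rpow_tsum_lt_of_forall_tsum_mul_lt hpq' hw (hc f hf) fun a ha hsa hA => ?_
    simpa using hI f (fun n => a (n - 1)) hf (fun n => ha _) hfi hIf hsa hA
  · intro hII f a hf ha hfi hIf hsa hA
    exact tsum_mul_lt_of_weighted_rpow_tsum_lt hpq' hw (hc f hf)
      (summable_weighted_integral_Ker18_rpow hμc hμpos hμint hν hVt hρ hα hγ hδ (by linarith)
        hII hf hfi hIf) (hII f hf hfi hIf) (fun n => ha _) hsa hA

/-- Theorem 1 (equivalence of (3.1) and (3.2)): the two-variable inequality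
Σₙ∫ K(x,n) aₙ f(x) dx < k(σ)‖f‖_{p,Φ_δ}‖a‖_{q,Ψ̃} holds for all admissible f, a
iff the one-variable inequality (Σₙ (νₙ/Ṽₙ^{1−pσ})(∫ K(x,n) f(x) dx)^p)^{1/p}
< k(σ)‖f‖_{p,Φ_δ} holds for all admissible f. -/
theorem stmt18 (μ : ℝ → ℝ) (ν Vt : ℕ → ℝ) (p q σ γ α ρ δ k : ℝ)
    (hp : 1 < p) (hpq : 1 / p + 1 / q = 1)
    (hμc : ContinuousOn μ (Set.Ioi 0)) (hμpos : ∀ x : ℝ, 0 < x → 0 < μ x)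
    (hμint : ∀ x : ℝ, 0 < x → MeasureTheory.IntegrableOn μ (Set.Ioc 0 x))
    (hν : ∀ n : ℕ, 1 ≤ n → 0 < ν n)
    (hVt : ∀ n : ℕ, 1 ≤ n →
      (∑ j ∈ Finset.Icc 1 n, ν j) - ν n / 2 ≤ Vt n ∧ Vt n ≤ ∑ j ∈ Finset.Icc 1 n, ν j)
    (hα : 0 ≤ α) (hαρ : α ≤ ρ) (hρ : 0 < ρ)
    (hγ : 0 < γ) (hγσ : γ < σ) (hσ : σ ≤ 1) (hδ : δ = 1 ∨ δ = -1)
    (hk : k = 2 * Real.Gamma (σ / γ) / (γ * (2 * ρ) ^ (σ / γ))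
      * ∑' j : ℕ, 1 / ((j : ℝ) + (α + ρ) / (2 * ρ)) ^ (σ / γ)) :
    ((∀ f : ℝ → ℝ, ∀ a : ℕ → ℝ, (∀ x, 0 ≤ f x) → (∀ n, 0 ≤ a n) →
        MeasureTheory.IntegrableOn (fun x => Phi18 μ p σ δ x * f x ^ p) (Set.Ioi (0:ℝ)) →
        0 < (∫ x in Set.Ioi (0:ℝ), Phi18 μ p σ δ x * f x ^ p) →
        Summable (fun n : ℕ => Psi18 ν Vt q σ (n + 1) * a (n + 1) ^ q) →
        0 < (∑' n : ℕ, Psi18 ν Vt q σ (n + 1) * a (n + 1) ^ q) →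
        (∑' n : ℕ, ∫ x in Set.Ioi (0:ℝ), Ker18 μ Vt ρ α γ δ x (n + 1) * a (n + 1) * f x)
          < k * (∫ x in Set.Ioi (0:ℝ), Phi18 μ p σ δ x * f x ^ p) ^ (1 / p)
              * (∑' n : ℕ, Psi18 ν Vt q σ (n + 1) * a (n + 1) ^ q) ^ (1 / q))
      ↔
      (∀ f : ℝ → ℝ, (∀ x, 0 ≤ f x) →
        MeasureTheory.IntegrableOn (fun x => Phi18 μ p σ δ x * f x ^ p) (Set.Ioi (0:ℝ)) →
        0 < (∫ x in Set.Ioi (0:ℝ), Phi18 μ p σ δ x * f x ^ p) →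
        (∑' n : ℕ, ν (n + 1) / Vt (n + 1) ^ (1 - p * σ)
            * (∫ x in Set.Ioi (0:ℝ), Ker18 μ Vt ρ α γ δ x (n + 1) * f x) ^ p) ^ (1 / p)
          < k * (∫ x in Set.Ioi (0:ℝ), Phi18 μ p σ δ x * f x ^ p) ^ (1 / p))) :=
  stmt18_general μ ν Vt p q σ γ α ρ δ k hp hpq hμc hμpos hμint hν hVt hα hρ hγ hδ
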